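/- arXiv:2309.12237 — 10 statements merged into one kernel-verified Lean document; each statement's English description precedes it below -/
import Mathlib

section
/- Lemma 1 (existence part): let ρ ∈ [0,1] and let τ*_asv ∈ ℝ satisfy the strict feasibility condition (1 − ρ)·P_fa,non^asv(τ*_asv) + ρ·P_fa,spf^asv(τ*_asv) > P_miss^asv(τ*_asv). If the CM score CDFs G_bona and G_spf are continuous, then there exists τ_cm ∈ ℝ such that (τ*_asv, τ_cm) ∈ Ω(ρ), i.e. P_miss^tdm(τ*_asv, τ_cm) = P_fa,ρ^tdm(τ*_asv, τ_cm). -/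
open MeasureTheory ProbabilityTheory Filter Topology Set

/-- ASV miss rate at threshold `τ` (target score distribution `μtar`): `F_tar(τ)`. -/
noncomputable def PmissAsv (μtar : Measure ℝ) (τ : ℝ) : ℝ := cdf μtar τ

/-- ASV nontarget false alarm rate: `1 − F_non(τ)`. -/
noncomputable def PfaNonAsv (μnon : Measure ℝ) (τ : ℝ) : ℝ := 1 - cdf μnon τ

/-- ASV spoof false alarm rate: `1 − F_spf(τ)`. -/
noncomputable def PfaSpfAsv (μspf : Measure ℝ) (τ : ℝ) : ℝ := 1 - cdf μspf τ

/-- CM miss rate: `G_bona(τ)`. -/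
noncomputable def PmissCm (νbona : Measure ℝ) (τ : ℝ) : ℝ := cdf νbona τ

/-- CM false alarm rate: `1 − G_spf(τ)`. -/
noncomputable def PfaCm (νspf : Measure ℝ) (τ : ℝ) : ℝ := 1 - cdf νspf τ

/-- Tandem miss rate under the AND rule. -/
noncomputable def PmissTdm (μtar νbona : Measure ℝ) (τasv τcm : ℝ) : ℝ :=
  PmissCm νbona τcm + PmissAsv μtar τasv - PmissCm νbona τcm * PmissAsv μtar τasv

/-- Tandem nontarget false alarm rate under the AND rule. -/
noncomputable def PfaNonTdm (μnon νbona : Measure ℝ) (τasv τcm : ℝ) : ℝ :=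
  (1 - PmissCm νbona τcm) * PfaNonAsv μnon τasv

/-- Tandem spoof false alarm rate under the AND rule. -/
noncomputable def PfaSpfTdm (μspf νspf : Measure ℝ) (τasv τcm : ℝ) : ℝ :=
  PfaCm νspf τcm * PfaSpfAsv μspf τasv

/-- Total tandem false alarm rate for spoof prevalence prior `ρ`. -/
noncomputable def PfaRhoTdm (μnon μspf νbona νspf : Measure ℝ) (ρ τasv τcm : ℝ) : ℝ :=
  (1 - ρ) * PfaNonTdm μnon νbona τasv τcm + ρ * PfaSpfTdm μspf νspf τasv τcm

/-- The t-EER path `Ω(ρ)`. -/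
noncomputable def tEERpath (μtar μnon μspf νbona νspf : Measure ℝ) (ρ : ℝ) : Set (ℝ × ℝ) :=
  {τ : ℝ × ℝ | PmissTdm μtar νbona τ.1 τ.2 = PfaRhoTdm μnon μspf νbona νspf ρ τ.1 τ.2}

/-- Lemma 1 (existence part): if the strict ASV feasibility condition holds at `τa` and the
CM score CDFs are continuous, then some `τcm` puts `(τa, τcm)` on the t-EER path `Ω(ρ)`. -/
theorem lemma1_existence (μtar μnon μspf νbona νspf : Measure ℝ)
    [IsProbabilityMeasure μtar] [IsProbabilityMeasure μnon] [IsProbabilityMeasure μspf]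
    [IsProbabilityMeasure νbona] [IsProbabilityMeasure νspf]
    (ρ τa : ℝ) (hρ0 : 0 ≤ ρ) (hρ1 : ρ ≤ 1)
    (hfeas : (1 - ρ) * PfaNonAsv μnon τa + ρ * PfaSpfAsv μspf τa > PmissAsv μtar τa)
    (hbona : Continuous fun x => cdf νbona x)
    (hspf : Continuous fun x => cdf νspf x) :
    ∃ τcm : ℝ, (τa, τcm) ∈ tEERpath μtar μnon μspf νbona νspf ρ := by
  set f : ℝ → ℝ := fun t =>
    PmissTdm μtar νbona τa t - PfaRhoTdm μnon μspf νbona νspf ρ τa t with hf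
  have hcont : Continuous f := by
    simp only [hf, PmissTdm, PfaRhoTdm, PfaNonTdm, PfaSpfTdm, PmissCm, PfaCm]
    fun_prop
  -- limit at -∞
  have hbot : Tendsto f atBot (𝓝 (PmissAsv μtar τa -
      ((1 - ρ) * PfaNonAsv μnon τa + ρ * PfaSpfAsv μspf τa))) := by
    have h1 : Tendsto (fun t => cdf νbona t) atBot (𝓝 0) := tendsto_cdf_atBot νbona
    have h2 : Tendsto (fun t => cdf νspf t) atBot (𝓝 0) := tendsto_cdf_atBot νspf
    have : Tendsto f atBot (𝓝 ((0 + PmissAsv μtar τa - 0 * PmissAsv μtar τa) -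
        ((1 - ρ) * ((1 - (0:ℝ)) * PfaNonAsv μnon τa) +
          ρ * ((1 - (0:ℝ)) * PfaSpfAsv μspf τa)))) := by
      simp only [hf, PmissTdm, PfaRhoTdm, PfaNonTdm, PfaSpfTdm, PmissCm, PfaCm]
      exact Tendsto.sub
        (Tendsto.sub (h1.add tendsto_const_nhds) (h1.mul tendsto_const_nhds))
        ((tendsto_const_nhds.mul ((tendsto_const_nhds.sub h1).mul tendsto_const_nhds)).add
          (tendsto_const_nhds.mul ((tendsto_const_nhds.sub h2).mul tendsto_const_nhds)))
    simpa using this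
  -- limit at +∞
  have htop : Tendsto f atTop (𝓝 1) := by
    have h1 : Tendsto (fun t => cdf νbona t) atTop (𝓝 1) := tendsto_cdf_atTop νbona
    have h2 : Tendsto (fun t => cdf νspf t) atTop (𝓝 1) := tendsto_cdf_atTop νspf
    have : Tendsto f atTop (𝓝 ((1 + PmissAsv μtar τa - 1 * PmissAsv μtar τa) -
        ((1 - ρ) * ((1 - (1:ℝ)) * PfaNonAsv μnon τa) +
          ρ * ((1 - (1:ℝ)) * PfaSpfAsv μspf τa)))) := by
      simp only [hf, PmissTdm, PfaRhoTdm, PfaNonTdm, PfaSpfTdm, PmissCm, PfaCm]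
      exact Tendsto.sub
        (Tendsto.sub (h1.add tendsto_const_nhds) (h1.mul tendsto_const_nhds))
        ((tendsto_const_nhds.mul ((tendsto_const_nhds.sub h1).mul tendsto_const_nhds)).add
          (tendsto_const_nhds.mul ((tendsto_const_nhds.sub h2).mul tendsto_const_nhds)))
    simpa using this
  obtain ⟨a, ha⟩ : ∃ a, f a < 0 := by
    have : ∀ᶠ t in atBot, f t < 0 :=
      hbot.eventually_lt_const (by linarith)
    exact this.exists
  obtain ⟨b, hb⟩ : ∃ b, 0 < f b :=
    (htop.eventually_const_lt (by norm_num)).exists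
  have h0 : (0 : ℝ) ∈ Set.uIcc (f a) (f b) :=
    Set.mem_uIcc.2 (Or.inl ⟨le_of_lt ha, le_of_lt hb⟩)
  obtain ⟨c, _, hc⟩ := intermediate_value_uIcc (f := f) hcont.continuousOn h0
  exact ⟨c, by simpa [tEERpath, hf, sub_eq_zero] using hc⟩
end

section
/- Lemma 1 (converse part): let ρ ∈ [0,1] and let τ*_asv ∈ ℝ be such that (1 − ρ)·P_fa,non^asv(τ*_asv) + ρ·P_fa,spf^asv(τ*_asv) < P_miss^asv(τ*_asv). Then for every τ_cm ∈ ℝ one has P_miss^tdm(τ*_asv, τ_cm) > P_fa,ρ^tdm(τ*_asv, τ_cm); in particular, there is no τ_cm ∈ ℝ with (τ*_asv, τ_cm) ∈ Ω(ρ). -/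
open MeasureTheory ProbabilityTheory Filter Topology Set

/-- Lemma 1 (converse part): if the ASV feasibility condition fails strictly at `τa`, then for
every CM threshold the tandem miss rate strictly exceeds the tandem false alarm rate; in
particular no `τcm` puts `(τa, τcm)` on the t-EER path `Ω(ρ)`. -/
theorem lemma1_converse (μtar μnon μspf νbona νspf : Measure ℝ)
    [IsProbabilityMeasure μtar] [IsProbabilityMeasure μnon] [IsProbabilityMeasure μspf]
    [IsProbabilityMeasure νbona] [IsProbabilityMeasure νspf]
    (ρ τa : ℝ) (hρ0 : 0 ≤ ρ) (hρ1 : ρ ≤ 1)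
    (hfeas : (1 - ρ) * PfaNonAsv μnon τa + ρ * PfaSpfAsv μspf τa < PmissAsv μtar τa) :
    ∀ τcm : ℝ,
      PmissTdm μtar νbona τa τcm > PfaRhoTdm μnon μspf νbona νspf ρ τa τcm ∧
      (τa, τcm) ∉ tEERpath μtar μnon μspf νbona νspf ρ := by
  intro τcm
  have hb0 := cdf_nonneg νbona τcm
  have hb1 := cdf_le_one νbona τcm
  have hs0 := cdf_nonneg νspf τcm
  have hs1 := cdf_le_one νspf τcm
  have ht0 := cdf_nonneg μtar τa
  have ht1 := cdf_le_one μtar τa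
  have hn0 := cdf_nonneg μnon τa
  have hn1 := cdf_le_one μnon τa
  have hp0 := cdf_nonneg μspf τa
  have hp1 := cdf_le_one μspf τa
  simp only [PmissTdm, PfaRhoTdm, PfaNonTdm, PfaSpfTdm, PmissCm, PmissAsv, PfaNonAsv,
    PfaSpfAsv, PfaCm, tEERpath, Set.mem_setOf_eq] at *
  constructor
  · nlinarith [mul_nonneg (sub_nonneg.2 hρ1) (mul_nonneg hb0 (sub_nonneg.2 hn1)),
      mul_nonneg hρ0 (mul_nonneg hs0 (sub_nonneg.2 hp1)),
      mul_nonneg hb0 (sub_nonneg.2 ht1)]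
  · intro h
    nlinarith [mul_nonneg (sub_nonneg.2 hρ1) (mul_nonneg hb0 (sub_nonneg.2 hn1)),
      mul_nonneg hρ0 (mul_nonneg hs0 (sub_nonneg.2 hp1)),
      mul_nonneg hb0 (sub_nonneg.2 ht1)]
end

section
/- Necessary ASV feasibility condition for the t-EER path: for every ρ ∈ [0,1] and every threshold pair (τ_asv, τ_cm) ∈ Ω(ρ), the inequality (1 − ρ)·P_fa,non^asv(τ_asv) + ρ·P_fa,spf^asv(τ_asv) ≥ P_miss^asv(τ_asv) holds (i.e. the t-EER path lies in the region where the total ASV false alarm rate is at least the ASV miss rate). -/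
open MeasureTheory ProbabilityTheory Filter Topology Set

/-- Necessary ASV feasibility condition: every point of the t-EER path satisfies
`(1 − ρ)·P_fa,non^asv + ρ·P_fa,spf^asv ≥ P_miss^asv` at its ASV threshold. -/
theorem teer_path_asv_feasibility (μtar μnon μspf νbona νspf : Measure ℝ)
    [IsProbabilityMeasure μtar] [IsProbabilityMeasure μnon] [IsProbabilityMeasure μspf]
    [IsProbabilityMeasure νbona] [IsProbabilityMeasure νspf] :
    ∀ ρ : ℝ, 0 ≤ ρ → ρ ≤ 1 → ∀ τasv τcm : ℝ,
      (τasv, τcm) ∈ tEERpath μtar μnon μspf νbona νspf ρ →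
      (1 - ρ) * PfaNonAsv μnon τasv + ρ * PfaSpfAsv μspf τasv ≥ PmissAsv μtar τasv := by
  intro ρ hρ0 hρ1 τasv τcm hmem
  have h := hmem
  simp only [tEERpath, Set.mem_setOf_eq, PmissTdm, PfaRhoTdm, PfaNonTdm, PfaSpfTdm,
    PmissCm, PmissAsv, PfaNonAsv, PfaSpfAsv, PfaCm] at h ⊢
  have h1 := cdf_nonneg μtar τasv
  have h2 := cdf_le_one μtar τasv
  have h3 := cdf_nonneg μnon τasv
  have h4 := cdf_le_one μnon τasv
  have h5 := cdf_nonneg μspf τasv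
  have h6 := cdf_le_one μspf τasv
  have h7 := cdf_nonneg νbona τcm
  have h8 := cdf_le_one νbona τcm
  have h9 := cdf_nonneg νspf τcm
  have h10 := cdf_le_one νspf τcm
  nlinarith [mul_nonneg hρ0 (mul_nonneg (sub_nonneg.2 h6) h9),
    mul_nonneg (sub_nonneg.2 hρ1) (mul_nonneg (sub_nonneg.2 h4) h7),
    mul_nonneg h7 (sub_nonneg.2 h2)]
end

section
/- Lemma 2 (existence part): let ρ ∈ [0,1] and let τ*_cm ∈ ℝ satisfy the strict feasibility condition 1 − ρ + ρ·P_fa^cm(τ*_cm) > (2 − ρ)·P_miss^cm(τ*_cm). If the ASV score CDFs F_tar, F_non and F_spf are continuous, then there exists τ_asv ∈ ℝ such that (τ_asv, τ*_cm) ∈ Ω(ρ), i.e. P_miss^tdm(τ_asv, τ*_cm) = P_fa,ρ^tdm(τ_asv, τ*_cm). -/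
open MeasureTheory ProbabilityTheory Filter Topology Set

/-- Lemma 2 (existence part): if the strict CM feasibility condition holds at `τc` and the
ASV score CDFs are continuous, then some `τasv` puts `(τasv, τc)` on the t-EER path `Ω(ρ)`. -/
theorem lemma2_existence (μtar μnon μspf νbona νspf : Measure ℝ)
    [IsProbabilityMeasure μtar] [IsProbabilityMeasure μnon] [IsProbabilityMeasure μspf]
    [IsProbabilityMeasure νbona] [IsProbabilityMeasure νspf]
    (ρ τc : ℝ) (hρ0 : 0 ≤ ρ) (hρ1 : ρ ≤ 1)
    (hfeas : 1 - ρ + ρ * PfaCm νspf τc > (2 - ρ) * PmissCm νbona τc)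
    (htar : Continuous fun x => cdf μtar x)
    (hnon : Continuous fun x => cdf μnon x)
    (hspf : Continuous fun x => cdf μspf x) :
    ∃ τasv : ℝ, (τasv, τc) ∈ tEERpath μtar μnon μspf νbona νspf ρ := by
  set Pm := PmissCm νbona τc with hPm
  set Pf := PfaCm νspf τc with hPf
  set h : ℝ → ℝ := fun τ =>
    PmissTdm μtar νbona τ τc - PfaRhoTdm μnon μspf νbona νspf ρ τ τc with hh
  have hcont : Continuous h := by
    unfold h
    unfold PmissTdm PfaRhoTdm PfaNonTdm PfaSpfTdm PmissAsv PfaNonAsv PfaSpfAsv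
    fun_prop
  have hBot : Tendsto h atBot (𝓝 ((2 - ρ) * Pm - (1 - ρ + ρ * Pf))) := by
    have ht := tendsto_cdf_atBot μtar
    have hn := tendsto_cdf_atBot μnon
    have hs := tendsto_cdf_atBot μspf
    have : Tendsto h atBot (𝓝 ((Pm + 0 - Pm * 0) -
        ((1 - ρ) * ((1 - Pm) * (1 - 0)) + ρ * (Pf * (1 - 0))))) := by
      unfold h
      unfold PmissTdm PfaRhoTdm PfaNonTdm PfaSpfTdm PmissAsv PfaNonAsv PfaSpfAsv PmissCm PfaCm
      exact ((tendsto_const_nhds.add ht).sub (tendsto_const_nhds.mul ht)).sub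
        (((tendsto_const_nhds.mul (tendsto_const_nhds.mul (tendsto_const_nhds.sub hn)))).add
          (tendsto_const_nhds.mul (tendsto_const_nhds.mul (tendsto_const_nhds.sub hs))))
    convert this using 2
    ring
  have hTop : Tendsto h atTop (𝓝 1) := by
    have ht := tendsto_cdf_atTop μtar
    have hn := tendsto_cdf_atTop μnon
    have hs := tendsto_cdf_atTop μspf
    have : Tendsto h atTop (𝓝 ((Pm + 1 - Pm * 1) -
        ((1 - ρ) * ((1 - Pm) * (1 - 1)) + ρ * (Pf * (1 - 1))))) := by
      unfold h
      unfold PmissTdm PfaRhoTdm PfaNonTdm PfaSpfTdm PmissAsv PfaNonAsv PfaSpfAsv PmissCm PfaCm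
      exact ((tendsto_const_nhds.add ht).sub (tendsto_const_nhds.mul ht)).sub
        (((tendsto_const_nhds.mul (tendsto_const_nhds.mul (tendsto_const_nhds.sub hn)))).add
          (tendsto_const_nhds.mul (tendsto_const_nhds.mul (tendsto_const_nhds.sub hs))))
    convert this using 2
    ring
  have hneg : (2 - ρ) * Pm - (1 - ρ + ρ * Pf) < 0 := by linarith
  have hev1 : ∀ᶠ τ in atBot, h τ < 0 := hBot.eventually_lt_const hneg
  have hev2 : ∀ᶠ τ in atTop, 0 < h τ := hTop.eventually_const_lt one_pos
  obtain ⟨a, ha⟩ := hev1.exists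
  obtain ⟨b, hb⟩ := hev2.exists
  have : (0 : ℝ) ∈ h '' uIcc a b :=
    intermediate_value_uIcc (hcont.continuousOn) ⟨le_trans inf_le_left ha.le, le_trans hb.le le_sup_right⟩
  obtain ⟨τ, _, hτ⟩ := this
  exact ⟨τ, by simpa [tEERpath, h, sub_eq_zero] using hτ⟩
end

section
/- Necessary CM feasibility condition for the t-EER path: for every ρ ∈ [0,1] and every threshold pair (τ_asv, τ_cm) ∈ Ω(ρ), the inequality 1 − ρ + ρ·P_fa^cm(τ_cm) ≥ (2 − ρ)·P_miss^cm(τ_cm) holds. -/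
open MeasureTheory ProbabilityTheory Filter Topology Set

/-- Necessary CM feasibility condition: every point of the t-EER path satisfies
`1 − ρ + ρ·P_fa^cm ≥ (2 − ρ)·P_miss^cm` at its CM threshold. -/
theorem teer_path_cm_feasibility (μtar μnon μspf νbona νspf : Measure ℝ)
    [IsProbabilityMeasure μtar] [IsProbabilityMeasure μnon] [IsProbabilityMeasure μspf]
    [IsProbabilityMeasure νbona] [IsProbabilityMeasure νspf] :
    ∀ ρ : ℝ, 0 ≤ ρ → ρ ≤ 1 → ∀ τasv τcm : ℝ,
      (τasv, τcm) ∈ tEERpath μtar μnon μspf νbona νspf ρ →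
      1 - ρ + ρ * PfaCm νspf τcm ≥ (2 - ρ) * PmissCm νbona τcm := by
  intro ρ hρ0 hρ1 τasv τcm h
  simp only [tEERpath, Set.mem_setOf_eq, PmissTdm, PfaRhoTdm, PfaNonTdm, PfaSpfTdm,
    PmissCm, PmissAsv, PfaCm, PfaNonAsv, PfaSpfAsv] at h ⊢
  have h1 := cdf_nonneg μtar τasv
  have h2 := cdf_le_one μtar τasv
  have h3 := cdf_nonneg μnon τasv
  have h4 := cdf_le_one μnon τasv
  have h5 := cdf_nonneg μspf τasv
  have h6 := cdf_le_one μspf τasv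
  have h7 := cdf_nonneg νbona τcm
  have h8 := cdf_le_one νbona τcm
  have h9 := cdf_nonneg νspf τcm
  have h10 := cdf_le_one νspf τcm
  nlinarith [mul_nonneg (sub_nonneg.2 h8) h1, mul_nonneg hρ0 (mul_nonneg (sub_nonneg.2 h10) h5), mul_nonneg (mul_nonneg (sub_nonneg.2 hρ1) (sub_nonneg.2 h8)) h3]
end

section
/- Theorem 1 (concurrency of error rates at a path intersection): let ρ₁, ρ₂ ∈ [0,1] with ρ₁ ≠ ρ₂, and suppose the threshold pair (τ_asv, τ_cm) lies on both t-EER paths, i.e. (τ_asv, τ_cm) ∈ Ω(ρ₁) ∩ Ω(ρ₂). Then the three tandem error rates at (τ_asv, τ_cm) are concurrently equal: P_miss^tdm(τ_asv, τ_cm) = P_fa,non^tdm(τ_asv, τ_cm) = P_fa,spf^tdm(τ_asv, τ_cm). -/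
open MeasureTheory ProbabilityTheory Filter Topology Set

/-- Theorem 1 (concurrency): at an intersection of two t-EER paths with distinct priors,
the three tandem error rates are concurrently equal. -/
theorem teer_intersection_concurrency (μtar μnon μspf νbona νspf : Measure ℝ)
    [IsProbabilityMeasure μtar] [IsProbabilityMeasure μnon] [IsProbabilityMeasure μspf]
    [IsProbabilityMeasure νbona] [IsProbabilityMeasure νspf]
    (ρ₁ ρ₂ : ℝ) (hρ₁0 : 0 ≤ ρ₁) (hρ₁1 : ρ₁ ≤ 1) (hρ₂0 : 0 ≤ ρ₂) (hρ₂1 : ρ₂ ≤ 1)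
    (hne : ρ₁ ≠ ρ₂) (τasv τcm : ℝ)
    (h₁ : (τasv, τcm) ∈ tEERpath μtar μnon μspf νbona νspf ρ₁)
    (h₂ : (τasv, τcm) ∈ tEERpath μtar μnon μspf νbona νspf ρ₂) :
    PmissTdm μtar νbona τasv τcm = PfaNonTdm μnon νbona τasv τcm ∧
    PmissTdm μtar νbona τasv τcm = PfaSpfTdm μspf νspf τasv τcm := by
  simp only [tEERpath, PfaRhoTdm, Set.mem_setOf_eq] at h₁ h₂
  have hab : PfaNonTdm μnon νbona τasv τcm = PfaSpfTdm μspf νspf τasv τcm := by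
    have h := sub_eq_zero.mpr (h₁.symm.trans h₂ : _)
    have : (ρ₂ - ρ₁) * (PfaNonTdm μnon νbona τasv τcm - PfaSpfTdm μspf νspf τasv τcm) = 0 := by
      ring_nf; ring_nf at h; linarith
    rcases mul_eq_zero.mp this with h' | h'
    · exact absurd (sub_eq_zero.mp h').symm hne
    · linarith [sub_eq_zero.mp h']
  constructor
  · rw [h₁, hab]; ring
  · rw [h₁, hab]; ring
end

section
/- Theorem 1 (threshold characterization, Eq. (28)): let ρ₁, ρ₂ ∈ [0,1] with ρ₁ ≠ ρ₂, and suppose (τ_asv, τ_cm) ∈ Ω(ρ₁) ∩ Ω(ρ₂). Then the intersection point satisfies the cross-multiplied balance condition P_fa,non^asv(τ_asv)·(1 − P_miss^cm(τ_cm)) = P_fa^cm(τ_cm)·P_fa,spf^asv(τ_asv) (which, when the denominators are nonzero, is the ratio identity P_fa,non^asv(τ_asv)/P_fa,spf^asv(τ_asv) = P_fa^cm(τ_cm)/(1 − P_miss^cm(τ_cm))). -/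
open MeasureTheory ProbabilityTheory Filter Topology Set

/-- Theorem 1 (threshold characterization, Eq. (28)): an intersection of two t-EER paths with
distinct priors satisfies the cross-multiplied balance condition
`P_fa,non^asv·(1 − P_miss^cm) = P_fa^cm·P_fa,spf^asv`. -/
theorem teer_intersection_balance (μtar μnon μspf νbona νspf : Measure ℝ)
    [IsProbabilityMeasure μtar] [IsProbabilityMeasure μnon] [IsProbabilityMeasure μspf]
    [IsProbabilityMeasure νbona] [IsProbabilityMeasure νspf]
    (ρ₁ ρ₂ : ℝ) (hρ₁0 : 0 ≤ ρ₁) (hρ₁1 : ρ₁ ≤ 1) (hρ₂0 : 0 ≤ ρ₂) (hρ₂1 : ρ₂ ≤ 1)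
    (hne : ρ₁ ≠ ρ₂) (τasv τcm : ℝ)
    (h₁ : (τasv, τcm) ∈ tEERpath μtar μnon μspf νbona νspf ρ₁)
    (h₂ : (τasv, τcm) ∈ tEERpath μtar μnon μspf νbona νspf ρ₂) :
    PfaNonAsv μnon τasv * (1 - PmissCm νbona τcm) = PfaCm νspf τcm * PfaSpfAsv μspf τasv := by
  simp only [tEERpath, Set.mem_setOf_eq, PmissTdm, PfaRhoTdm, PfaNonTdm, PfaSpfTdm] at h₁ h₂
  have hd : ρ₁ - ρ₂ ≠ 0 := sub_ne_zero.mpr hne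
  have key : (ρ₁ - ρ₂) * (PfaNonAsv μnon τasv * (1 - PmissCm νbona τcm)
      - PfaCm νspf τcm * PfaSpfAsv μspf τasv) = 0 := by linear_combination h₁ - h₂
  rcases mul_eq_zero.mp key with h | h
  · exact absurd h hd
  · linarith
end

section
/- Theorem 1 (value of the concurrent t-EER, Eq. (29)): let ρ₁, ρ₂ ∈ [0,1] with ρ₁ ≠ ρ₂, and suppose (τ_asv, τ_cm) ∈ Ω(ρ₁) ∩ Ω(ρ₂). Then the common tandem error rate at this point equals the product of the ASV spoof false alarm rate and the CM false alarm rate: P_miss^tdm(τ_asv, τ_cm) = P_fa,spf^asv(τ_asv)·P_fa^cm(τ_cm). -/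
open MeasureTheory ProbabilityTheory Filter Topology Set

/-- Theorem 1 (value, Eq. (29)): at an intersection of two t-EER paths with distinct priors,
the common tandem error rate equals `P_fa,spf^asv·P_fa^cm`. -/
theorem teer_intersection_value (μtar μnon μspf νbona νspf : Measure ℝ)
    [IsProbabilityMeasure μtar] [IsProbabilityMeasure μnon] [IsProbabilityMeasure μspf]
    [IsProbabilityMeasure νbona] [IsProbabilityMeasure νspf]
    (ρ₁ ρ₂ : ℝ) (hρ₁0 : 0 ≤ ρ₁) (hρ₁1 : ρ₁ ≤ 1) (hρ₂0 : 0 ≤ ρ₂) (hρ₂1 : ρ₂ ≤ 1)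
    (hne : ρ₁ ≠ ρ₂) (τasv τcm : ℝ)
    (h₁ : (τasv, τcm) ∈ tEERpath μtar μnon μspf νbona νspf ρ₁)
    (h₂ : (τasv, τcm) ∈ tEERpath μtar μnon μspf νbona νspf ρ₂) :
    PmissTdm μtar νbona τasv τcm = PfaSpfAsv μspf τasv * PfaCm νspf τcm := by
  simp only [tEERpath, PfaRhoTdm, Set.mem_setOf_eq] at h₁ h₂
  have hAB : PfaNonTdm μnon νbona τasv τcm = PfaSpfTdm μspf νspf τasv τcm := by
    have h := sub_ne_zero.mpr hne
    have := h₁.symm.trans h₂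
    have : (ρ₁ - ρ₂) * (PfaNonTdm μnon νbona τasv τcm - PfaSpfTdm μspf νspf τasv τcm) = 0 := by
      ring_nf; ring_nf at this; linarith
    rcases mul_eq_zero.mp this with h'|h'
    · exact absurd h' h
    · linarith
  have : PmissTdm μtar νbona τasv τcm = PfaSpfTdm μspf νspf τasv τcm := by
    rw [h₁, hAB]; ring
  rw [this, PfaSpfTdm, mul_comm]
end

section
/- Theorem 1 (prior-independence of the intersection point): let ρ₁, ρ₂ ∈ [0,1] with ρ₁ ≠ ρ₂, and suppose (τ_asv, τ_cm) ∈ Ω(ρ₁) ∩ Ω(ρ₂). Then (τ_asv, τ_cm) lies on the t-EER path Ω(ρ) for every ρ ∈ [0,1], and the t-EER value P_miss^tdm(τ_asv, τ_cm) = P_fa,ρ^tdm(τ_asv, τ_cm) at this point is the same for all ρ ∈ [0,1]. -/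
open MeasureTheory ProbabilityTheory Filter Topology Set

/-- Theorem 1 (prior-independence): an intersection of two t-EER paths with distinct priors
lies on `Ω(ρ)` for every `ρ ∈ [0,1]`, with the same t-EER value for all such `ρ`. -/
theorem teer_intersection_prior_independent (μtar μnon μspf νbona νspf : Measure ℝ)
    [IsProbabilityMeasure μtar] [IsProbabilityMeasure μnon] [IsProbabilityMeasure μspf]
    [IsProbabilityMeasure νbona] [IsProbabilityMeasure νspf]
    (ρ₁ ρ₂ : ℝ) (hρ₁0 : 0 ≤ ρ₁) (hρ₁1 : ρ₁ ≤ 1) (hρ₂0 : 0 ≤ ρ₂) (hρ₂1 : ρ₂ ≤ 1)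
    (hne : ρ₁ ≠ ρ₂) (τasv τcm : ℝ)
    (h₁ : (τasv, τcm) ∈ tEERpath μtar μnon μspf νbona νspf ρ₁)
    (h₂ : (τasv, τcm) ∈ tEERpath μtar μnon μspf νbona νspf ρ₂) :
    ∀ ρ : ℝ, 0 ≤ ρ → ρ ≤ 1 →
      (τasv, τcm) ∈ tEERpath μtar μnon μspf νbona νspf ρ ∧
      PfaRhoTdm μnon μspf νbona νspf ρ τasv τcm = PmissTdm μtar νbona τasv τcm := by
  simp only [tEERpath, Set.mem_setOf_eq, PfaRhoTdm] at *
  set N := PfaNonTdm μnon νbona τasv τcm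
  set S := PfaSpfTdm μspf νspf τasv τcm
  set M := PmissTdm μtar νbona τasv τcm
  have hSN : S = N := by
    have hne' : ρ₁ - ρ₂ ≠ 0 := sub_ne_zero.mpr hne
    have h3 : (ρ₁ - ρ₂) * (S - N) = 0 := by nlinarith [h₁, h₂]
    have := mul_eq_zero.mp h3
    rcases this with h | h
    · exact absurd h hne'
    · linarith
  have hMN : M = N := by rw [hSN] at h₁; linarith
  intro ρ _ _
  rw [hSN, hMN]
  constructor <;> ring
end

section
/- Nonemptiness of the t-EER path: if the CM score CDFs G_bona and G_spf are continuous, then for every spoof prevalence prior ρ ∈ [0,1] there exists a threshold pair (τ_asv, τ_cm) ∈ ℝ² lying on the t-EER path Ω(ρ), i.e. with P_miss^tdm(τ_asv, τ_cm) = P_fa,ρ^tdm(τ_asv, τ_cm). -/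
open MeasureTheory ProbabilityTheory Filter Topology Set

/-! Fix `τasv`. As a function of `τcm`, the gap `P_miss^tdm − P_fa,ρ^tdm` is continuous (the CM
CDFs are), tends to `1` as `τcm → ∞` (the CM rejects everything) and, as `τcm → -∞` (the CM
accepts everything), to the gap of the ASV alone, which in turn tends to `-1` as `τasv → -∞`.
So for `τasv` far enough to the left the intermediate value theorem yields a zero in `τcm`. -/

noncomputable def tdmGap (μtar μnon μspf νbona νspf : Measure ℝ) (ρ τasv τcm : ℝ) : ℝ :=
  PmissTdm μtar νbona τasv τcm - PfaRhoTdm μnon μspf νbona νspf ρ τasv τcm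

noncomputable def asvGap (μtar μnon μspf : Measure ℝ) (ρ τ : ℝ) : ℝ :=
  PmissAsv μtar τ - ((1 - ρ) * PfaNonAsv μnon τ + ρ * PfaSpfAsv μspf τ)

section Gaps

variable {μtar μnon μspf νbona νspf : Measure ℝ} {ρ : ℝ}

theorem tendsto_asvGap_atBot : Tendsto (asvGap μtar μnon μspf ρ) atBot (𝓝 (-1)) := by
  have h : Tendsto (asvGap μtar μnon μspf ρ) atBot
      (𝓝 (0 - ((1 - ρ) * (1 - 0) + ρ * (1 - 0)))) := by
    unfold asvGap PmissAsv PfaNonAsv PfaSpfAsv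
    exact (tendsto_cdf_atBot μtar).sub
      ((((tendsto_cdf_atBot μnon).const_sub 1).const_mul _).add
        (((tendsto_cdf_atBot μspf).const_sub 1).const_mul _))
  convert h using 2
  ring

theorem continuous_tdmGap (hbona : Continuous fun x => cdf νbona x)
    (hspf : Continuous fun x => cdf νspf x) (τasv : ℝ) :
    Continuous (tdmGap μtar μnon μspf νbona νspf ρ τasv) := by
  unfold tdmGap PmissTdm PfaRhoTdm PfaNonTdm PfaSpfTdm PmissCm PfaCm
  fun_prop

theorem tendsto_tdmGap {l : Filter ℝ} {m f : ℝ} (τasv : ℝ)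
    (hm : Tendsto (PmissCm νbona) l (𝓝 m)) (hf : Tendsto (PfaCm νspf) l (𝓝 f)) :
    Tendsto (tdmGap μtar μnon μspf νbona νspf ρ τasv) l
      (𝓝 (m + PmissAsv μtar τasv - m * PmissAsv μtar τasv -
        ((1 - ρ) * ((1 - m) * PfaNonAsv μnon τasv) + ρ * (f * PfaSpfAsv μspf τasv)))) := by
  unfold tdmGap PmissTdm PfaRhoTdm PfaNonTdm PfaSpfTdm
  exact ((hm.add_const _).sub (hm.mul_const _)).sub
    ((((tendsto_const_nhds.sub hm).mul_const _).const_mul _).add ((hf.mul_const _).const_mul _))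

theorem tendsto_tdmGap_atBot (τasv : ℝ) :
    Tendsto (tdmGap μtar μnon μspf νbona νspf ρ τasv) atBot
      (𝓝 (asvGap μtar μnon μspf ρ τasv)) := by
  convert tendsto_tdmGap τasv (tendsto_cdf_atBot νbona)
    ((tendsto_cdf_atBot νspf).const_sub 1) using 2
  simp [asvGap]

theorem tendsto_tdmGap_atTop (τasv : ℝ) :
    Tendsto (tdmGap μtar μnon μspf νbona νspf ρ τasv) atTop (𝓝 1) := by
  convert tendsto_tdmGap τasv (tendsto_cdf_atTop νbona)
    ((tendsto_cdf_atTop νspf).const_sub 1) using 2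
  ring

end Gaps

theorem teer_path_nonempty_general (μtar μnon μspf νbona νspf : Measure ℝ)
    (hbona : Continuous fun x => cdf νbona x)
    (hspf : Continuous fun x => cdf νspf x) :
    ∀ ρ : ℝ, 0 ≤ ρ → ρ ≤ 1 →
      ∃ τ : ℝ × ℝ, τ ∈ tEERpath μtar μnon μspf νbona νspf ρ := by
  intro ρ _ _
  obtain ⟨τasv, hasv⟩ : ∃ τasv, asvGap μtar μnon μspf ρ τasv < 0 :=
    (tendsto_asvGap_atBot.eventually_lt_const neg_one_lt_zero).exists
  obtain ⟨τcm, -, hgap⟩ := isPreconnected_univ.intermediate_value_Ioo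
    (le_principal_iff.2 univ_mem) (le_principal_iff.2 univ_mem)
    (continuous_tdmGap hbona hspf τasv).continuousOn (tendsto_tdmGap_atBot τasv)
    (tendsto_tdmGap_atTop τasv) ⟨hasv, one_pos⟩
  exact ⟨(τasv, τcm), sub_eq_zero.mp hgap⟩

/-- Nonemptiness of the t-EER path: if the CM score CDFs are continuous, then for every
`ρ ∈ [0,1]` the t-EER path `Ω(ρ)` contains at least one threshold pair. -/
theorem teer_path_nonempty (μtar μnon μspf νbona νspf : Measure ℝ)
    [IsProbabilityMeasure μtar] [IsProbabilityMeasure μnon] [IsProbabilityMeasure μspf]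
    [IsProbabilityMeasure νbona] [IsProbabilityMeasure νspf]
    (hbona : Continuous fun x => cdf νbona x)
    (hspf : Continuous fun x => cdf νspf x) :
    ∀ ρ : ℝ, 0 ≤ ρ → ρ ≤ 1 →
      ∃ τ : ℝ × ℝ, τ ∈ tEERpath μtar μnon μspf νbona νspf ρ :=
  teer_path_nonempty_general μtar μnon μspf νbona νspf hbona hspf
end
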